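/- arXiv:2601.08330 — 2 statements merged into one kernel-verified Lean document; each statement's English description precedes it below -/
import Mathlib

section
/- For nonnegative finite measures μ, ν on ℝ^d, the extended 1-Wasserstein distance W̄₁(μ,ν) (defined via adding a cemetery point and padding the smaller mass by a Dirac at the cemetery, with ground metric |x−y|∧1 on ℝ^d and distance to the cemetery equal to (|x−x₀|∧1)+1) is equivalent to the bounded Lipschitz distance d: (1/2)·d(μ,ν) ≤ W̄₁(μ,ν) ≤ 2·d(μ,ν). -/
open MeasureTheory

/-- The bounded Lipschitz distance on (nonnegative, finite) Borel measures on ℝ^d. -/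
noncomputable def blDist {d : ℕ} (μ ν : Measure (EuclideanSpace ℝ (Fin d))) : ℝ :=
  sSup {r : ℝ | ∃ f : EuclideanSpace ℝ (Fin d) → ℝ,
    (∀ x, |f x| ≤ 1) ∧ LipschitzWith 1 f ∧ r = |∫ x, f x ∂μ - ∫ x, f x ∂ν|}

/-- The extended 1-Wasserstein distance `W̄₁(μ,ν)` on nonnegative finite measures,
expressed through its Kantorovich dual formulation: the supremum over functions `f̄`
that are 1-Lipschitz on the extended space `ℝ^d ∪ {∂}`, where the ground metric on ℝ^d
is `|x−y| ∧ 1` and the distance to the cemetery `∂` is `(|x−x₀| ∧ 1) + 1`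
(here `a = f̄(∂)`), of `|∫ (f̄(x) − f̄(∂)) d(μ−ν)|`. -/
noncomputable def extW1 {d : ℕ} (x₀ : EuclideanSpace ℝ (Fin d))
    (μ ν : Measure (EuclideanSpace ℝ (Fin d))) : ℝ :=
  sSup {r : ℝ | ∃ (f : EuclideanSpace ℝ (Fin d) → ℝ) (a : ℝ),
    (∀ x y, |f x - f y| ≤ min (dist x y) 1) ∧
    (∀ x, |f x - a| ≤ min (dist x x₀) 1 + 1) ∧
    r = |(∫ x, f x ∂μ - ∫ x, f x ∂ν) -
          a * ((μ Set.univ).toReal - (ν Set.univ).toReal)|}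

/-! Both quantities are suprema of `|∫ g dμ - ∫ g dν|` over classes of test functions that
are the same up to a factor two. A bounded Lipschitz test function `f` gives the admissible
pair `(f / 2, 0)` for `W̄₁`. Conversely, an admissible pair `(f, a)` has `|f - a| ≤ 2`, and
`(f - a) / 2` is bounded Lipschitz; the mass correction `a (μ(ℝ^d) - ν(ℝ^d))` is exactly
what turns `∫ f d(μ - ν)` into `∫ (f - a) d(μ - ν)`. -/

section General

variable {X : Type*}

lemma LipschitzWith.of_abs_sub_le_min_dist_one [PseudoMetricSpace X] {f : X → ℝ}
    (hf : ∀ x y, |f x - f y| ≤ min (dist x y) 1) : LipschitzWith 1 f :=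
  .mk_one fun x y => (Real.dist_eq _ _).trans_le ((hf x y).trans (min_le_left _ _))

variable [MeasurableSpace X] (μ ν : Measure X) [IsFiniteMeasure μ] [IsFiniteMeasure ν]

lemma abs_integral_sub_integral_le {f : X → ℝ} {C : ℝ} (hf : ∀ x, |f x| ≤ C) :
    |∫ x, f x ∂μ - ∫ x, f x ∂ν| ≤ C * μ.real Set.univ + C * ν.real Set.univ := by
  have hf' : ∀ x, ‖f x‖ ≤ C := fun x => (Real.norm_eq_abs (f x)).trans_le (hf x)
  have hμ : |∫ x, f x ∂μ| ≤ C * μ.real Set.univ :=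
    (Real.norm_eq_abs _).symm.trans_le (norm_integral_le_of_norm_le_const (.of_forall hf'))
  have hν : |∫ x, f x ∂ν| ≤ C * ν.real Set.univ :=
    (Real.norm_eq_abs _).symm.trans_le (norm_integral_le_of_norm_le_const (.of_forall hf'))
  exact (abs_sub _ _).trans (add_le_add hμ hν)

lemma Continuous.integrable_of_abs_sub_le [TopologicalSpace X] [OpensMeasurableSpace X]
    {f : X → ℝ} (hf : Continuous f) {a C : ℝ} (hfa : ∀ x, |f x - a| ≤ C) :
    Integrable f μ :=
  .of_bound hf.aestronglyMeasurable (|a| + C) <| .of_forall fun x => by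
    rw [Real.norm_eq_abs]
    linarith [abs_sub_abs_le_abs_sub (f x) a, hfa x]

lemma integral_sub_const_of_integrable {f : X → ℝ} (hf : Integrable f μ) (a : ℝ) :
    ∫ x, (f x - a) ∂μ = ∫ x, f x ∂μ - a * μ.real Set.univ := by
  rw [integral_sub hf (integrable_const a), integral_const, smul_eq_mul, mul_comm]

end General

section Euclidean

variable {d : ℕ} (μ ν : Measure (EuclideanSpace ℝ (Fin d)))

lemma blDist_le {c : ℝ}
    (h : ∀ f : EuclideanSpace ℝ (Fin d) → ℝ, (∀ x, |f x| ≤ 1) → LipschitzWith 1 f →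
      |∫ x, f x ∂μ - ∫ x, f x ∂ν| ≤ c) :
    blDist μ ν ≤ c := by
  refine csSup_le ⟨0, fun _ => 0, by simp, LipschitzWith.const' 0, by simp⟩ ?_
  rintro _ ⟨f, hf_le, hf, rfl⟩
  exact h f hf_le hf

variable [IsFiniteMeasure μ] [IsFiniteMeasure ν]

lemma abs_integral_sub_le_blDist {f : EuclideanSpace ℝ (Fin d) → ℝ} (hf_le : ∀ x, |f x| ≤ 1)
    (hf : LipschitzWith 1 f) : |∫ x, f x ∂μ - ∫ x, f x ∂ν| ≤ blDist μ ν := by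
  refine le_csSup ⟨μ.real Set.univ + ν.real Set.univ, ?_⟩ ⟨f, hf_le, hf, rfl⟩
  rintro _ ⟨g, hg_le, -, rfl⟩
  simpa using abs_integral_sub_integral_le μ ν hg_le

variable (x₀ : EuclideanSpace ℝ (Fin d))

lemma extW1_objective_eq {f : EuclideanSpace ℝ (Fin d) → ℝ} {a : ℝ}
    (hf : ∀ x y, |f x - f y| ≤ min (dist x y) 1) (hfa : ∀ x, |f x - a| ≤ min (dist x x₀) 1 + 1) :
    (∫ x, f x ∂μ - ∫ x, f x ∂ν) - a * ((μ Set.univ).toReal - (ν Set.univ).toReal) =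
      ∫ x, (f x - a) ∂μ - ∫ x, (f x - a) ∂ν := by
  have hfa' : ∀ x, |f x - a| ≤ 2 := fun x => by linarith [hfa x, min_le_right (dist x x₀) 1]
  have hcont := (LipschitzWith.of_abs_sub_le_min_dist_one hf).continuous
  rw [integral_sub_const_of_integrable μ (hcont.integrable_of_abs_sub_le μ hfa'),
    integral_sub_const_of_integrable ν (hcont.integrable_of_abs_sub_le ν hfa')]
  simp only [measureReal_def]
  ring

lemma abs_integral_sub_le_extW1 {f : EuclideanSpace ℝ (Fin d) → ℝ} {a : ℝ}
    (hf : ∀ x y, |f x - f y| ≤ min (dist x y) 1) (hfa : ∀ x, |f x - a| ≤ min (dist x x₀) 1 + 1) :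
    |∫ x, (f x - a) ∂μ - ∫ x, (f x - a) ∂ν| ≤ extW1 x₀ μ ν := by
  refine le_csSup ⟨2 * μ.real Set.univ + 2 * ν.real Set.univ, ?_⟩
    ⟨f, a, hf, hfa, by rw [extW1_objective_eq μ ν x₀ hf hfa]⟩
  rintro _ ⟨g, b, hg, hgb, rfl⟩
  rw [extW1_objective_eq μ ν x₀ hg hgb]
  exact abs_integral_sub_integral_le μ ν fun x => by
    linarith [hgb x, min_le_right (dist x x₀) 1]

lemma extW1_le {c : ℝ}
    (h : ∀ (f : EuclideanSpace ℝ (Fin d) → ℝ) (a : ℝ), (∀ x y, |f x - f y| ≤ min (dist x y) 1) →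
      (∀ x, |f x - a| ≤ min (dist x x₀) 1 + 1) →
      |∫ x, (f x - a) ∂μ - ∫ x, (f x - a) ∂ν| ≤ c) :
    extW1 x₀ μ ν ≤ c := by
  refine csSup_le
    ⟨0, fun _ => 0, 0, by simp, fun x => by rw [sub_self, abs_zero]; positivity, by simp⟩ ?_
  rintro _ ⟨f, a, hf, hfa, rfl⟩
  rw [extW1_objective_eq μ ν x₀ hf hfa]
  exact h f a hf hfa

lemma blDist_le_two_mul_extW1 : blDist μ ν ≤ 2 * extW1 x₀ μ ν := by
  refine blDist_le μ ν fun f hf_le hf => ?_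
  have hhalf : ∀ x y, |f x / 2 - f y / 2| ≤ min (dist x y) 1 := fun x y => by
    rw [← sub_div, abs_div, abs_two]
    have hdist : |f x - f y| ≤ dist x y := by simpa [Real.dist_eq] using hf.dist_le_mul x y
    have hbound : |f x - f y| ≤ 2 := by linarith [abs_sub (f x) (f y), hf_le x, hf_le y]
    exact le_min (by linarith [dist_nonneg (x := x) (y := y)]) (by linarith)
  have hhalf_le : ∀ x, |f x / 2 - 0| ≤ min (dist x x₀) 1 + 1 := fun x => by
    rw [sub_zero, abs_div, abs_two]
    linarith [hf_le x, le_min (dist_nonneg (x := x) (y := x₀)) zero_le_one]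
  have := abs_integral_sub_le_extW1 μ ν x₀ hhalf hhalf_le
  simp only [sub_zero, integral_div, ← sub_div, abs_div, abs_two] at this
  linarith

lemma extW1_le_two_mul_blDist : extW1 x₀ μ ν ≤ 2 * blDist μ ν := by
  refine extW1_le μ ν x₀ fun f a hf hfa => ?_
  have hcentered_le : ∀ x, |(f x - a) / 2| ≤ 1 := fun x => by
    rw [abs_div, abs_two]
    linarith [hfa x, min_le_right (dist x x₀) 1]
  have hcentered : LipschitzWith 1 fun x => (f x - a) / 2 := .mk_one fun x y => by
    rw [Real.dist_eq, show (f x - a) / 2 - (f y - a) / 2 = (f x - f y) / 2 by ring, abs_div,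
      abs_two]
    linarith [hf x y, min_le_left (dist x y) 1, dist_nonneg (x := x) (y := y)]
  have := abs_integral_sub_le_blDist μ ν hcentered_le hcentered
  simp only [integral_div, ← sub_div, abs_div, abs_two] at this
  linarith

end Euclidean

/-- the extended 1-Wasserstein distance is equivalent to the bounded
Lipschitz distance: `(1/2)·d(μ,ν) ≤ W̄₁(μ,ν) ≤ 2·d(μ,ν)`. -/
theorem extW1_equiv_blDist {d : ℕ} (x₀ : EuclideanSpace ℝ (Fin d))
    (μ ν : Measure (EuclideanSpace ℝ (Fin d)))
    [IsFiniteMeasure μ] [IsFiniteMeasure ν] :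
    (1 / 2) * blDist μ ν ≤ extW1 x₀ μ ν ∧ extW1 x₀ μ ν ≤ 2 * blDist μ ν :=
  ⟨by linarith [blDist_le_two_mul_extW1 μ ν x₀], extW1_le_two_mul_blDist μ ν x₀⟩
end

section
/- Construction of a linear derivative from an intrinsic derivative: if Ũ : P₂(ℝ^{d+1}) → ℝ has a jointly continuous intrinsic derivative D_ρŨ(ρ, x) of at most linear growth, then δ_ρŨ(ρ, x) := ∫₀¹ D_ρŨ(ρ, sx)·x ds is a linear functional derivative of Ũ. Consequently, if the first d coordinates of D_ρŨ(ρ,(y,z)) are of the form f_i(ρ,y)·z and the (d+1)th coordinate is independent of z, then δ_ρŨ(ρ,(y,z)) is proportional to z, i.e. δ_ρŨ(ρ,(y,z)) = z·h(ρ,y) for some function h. -/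
open MeasureTheory
open scoped RealInnerProductSpace

/-- `δF` is a linear (functional) derivative of `F` on the convex set `S` of measures,
with at most quadratic growth (uniformly in the measure) on the carrier set `A`. -/
def IsLinearDerivOn {X : Type*} [MeasurableSpace X] [NormedAddCommGroup X]
    (F : Measure X → ℝ) (S : Set (Measure X)) (A : Set X)
    (δF : Measure X → X → ℝ) : Prop :=
  (∃ K : ℝ, ∀ μ ∈ S, ∀ x ∈ A, |δF μ x| ≤ K * (1 + ‖x‖ ^ 2)) ∧
  ∀ μ ∈ S, ∀ ν ∈ S,
    F μ - F ν =
      ∫ l in (0:ℝ)..1,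
        ((∫ x, δF (ENNReal.ofReal l • μ + ENNReal.ofReal (1 - l) • ν) x ∂μ) -
          ∫ x, δF (ENNReal.ofReal l • μ + ENNReal.ofReal (1 - l) • ν) x ∂ν)

/-- `P₂(ℝ^{d+1})` (points written `(y,z) ∈ ℝ^d × ℝ`): probability measures with
finite second moment. -/
def P2set (d : ℕ) : Set (Measure (EuclideanSpace ℝ (Fin d) × ℝ)) :=
  {ρ | IsProbabilityMeasure ρ ∧ Integrable (fun p => ‖p‖ ^ 2) ρ}

/-- The dot product on `ℝ^{d+1} = ℝ^d × ℝ`. -/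
noncomputable def dotProd {d : ℕ} (a b : EuclideanSpace ℝ (Fin d) × ℝ) : ℝ :=
  ⟪a.1, b.1⟫ + a.2 * b.2

lemma abs_dotProd_le {d : ℕ} (a b : EuclideanSpace ℝ (Fin d) × ℝ) :
    |dotProd a b| ≤ 2 * ‖a‖ * ‖b‖ := by
  have h1 : |⟪a.1, b.1⟫| ≤ ‖a‖ * ‖b‖ := by
    calc |⟪a.1, b.1⟫| ≤ ‖a.1‖ * ‖b.1‖ := abs_real_inner_le_norm _ _
    _ ≤ ‖a‖ * ‖b‖ := by gcongr <;> [exact norm_fst_le a; exact norm_fst_le b]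
  have h2 : |a.2 * b.2| ≤ ‖a‖ * ‖b‖ := by
    rw [abs_mul]
    gcongr <;> [exact (norm_snd_le a); exact (norm_snd_le b)]
  calc |dotProd a b| ≤ |⟪a.1, b.1⟫| + |a.2 * b.2| := abs_add_le _ _
  _ ≤ 2 * ‖a‖ * ‖b‖ := by linarith

lemma continuous_dotProd {d : ℕ} :
    Continuous fun p : (EuclideanSpace ℝ (Fin d) × ℝ) × (EuclideanSpace ℝ (Fin d) × ℝ) =>
      dotProd p.1 p.2 := by
  unfold dotProd
  exact (continuous_inner.comp ((continuous_fst.comp continuous_fst).prodMk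
    (continuous_fst.comp continuous_snd))).add
    ((continuous_snd.comp continuous_fst).mul (continuous_snd.comp continuous_snd))

/-- construction of a linear derivative from an intrinsic derivative.
If `Ũ : P₂(ℝ^{d+1}) → ℝ` has a jointly continuous intrinsic derivative `D_ρŨ` of at
most linear growth (i.e. `D_ρŨ(ρ,·)` is the gradient of some linear derivative `δŨ`),
then `δ_ρŨ(ρ,x) := ∫₀¹ D_ρŨ(ρ, sx)·x ds` is a linear functional derivative of `Ũ`.
Consequently, if the first `d` coordinates of `D_ρŨ(ρ,(y,z))` are of the form
`f_i(ρ,y)·z` and the `(d+1)`-th coordinate is independent of `z`, then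
`δ_ρŨ(ρ,(y,z)) = z·h(ρ,y)` for some `h`. -/
theorem linearDeriv_from_intrinsicDeriv {d : ℕ}
    (U : Measure (EuclideanSpace ℝ (Fin d) × ℝ) → ℝ)
    (DU : Measure (EuclideanSpace ℝ (Fin d) × ℝ) →
      EuclideanSpace ℝ (Fin d) × ℝ → EuclideanSpace ℝ (Fin d) × ℝ)
    -- `DU` is the intrinsic derivative of `U`: the gradient of some linear derivative
    (hintr : ∃ δU, IsLinearDerivOn U (P2set d) Set.univ δU ∧
      ∀ ρ ∈ P2set d, ∀ x v : EuclideanSpace ℝ (Fin d) × ℝ,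
        HasDerivAt (fun t : ℝ => δU ρ (x + t • v)) (dotProd (DU ρ x) v) 0)
    -- joint continuity of `DU`
    (hcont : Continuous (fun q :
        ProbabilityMeasure (EuclideanSpace ℝ (Fin d) × ℝ) ×
          (EuclideanSpace ℝ (Fin d) × ℝ) => DU (↑q.1) q.2))
    -- linear growth of `DU`
    (hgrowth : ∃ K : ℝ, ∀ ρ ∈ P2set d, ∀ x, ‖DU ρ x‖ ≤ K * (1 + ‖x‖)) :
    IsLinearDerivOn U (P2set d) Set.univ
      (fun ρ x => ∫ s in (0:ℝ)..1, dotProd (DU ρ (s • x)) x) ∧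
    (∀ f : Measure (EuclideanSpace ℝ (Fin d) × ℝ) → EuclideanSpace ℝ (Fin d) →
        EuclideanSpace ℝ (Fin d),
      (∀ ρ ∈ P2set d, ∀ (y : EuclideanSpace ℝ (Fin d)) (z : ℝ),
        (DU ρ (y, z)).1 = z • f ρ y) →
      (∀ ρ ∈ P2set d, ∀ (y : EuclideanSpace ℝ (Fin d)) (z z' : ℝ),
        (DU ρ (y, z)).2 = (DU ρ (y, z')).2) →
      ∃ h : Measure (EuclideanSpace ℝ (Fin d) × ℝ) → EuclideanSpace ℝ (Fin d) → ℝ,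
        ∀ ρ ∈ P2set d, ∀ (y : EuclideanSpace ℝ (Fin d)) (z : ℝ),
          (∫ s in (0:ℝ)..1, dotProd (DU ρ (s • (y, z))) (y, z)) = z * h ρ y) := by
  obtain ⟨δU, hδU, hD⟩ := hintr
  obtain ⟨K, hK⟩ := hgrowth
  -- continuity of DU ρ for ρ ∈ P2set
  have hcρ : ∀ ρ ∈ P2set d, Continuous (DU ρ) := by
    intro ρ hρ
    have : IsProbabilityMeasure ρ := hρ.1
    exact hcont.comp (Continuous.prodMk
      (@continuous_const (EuclideanSpace ℝ (Fin d) × ℝ)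
        (ProbabilityMeasure (EuclideanSpace ℝ (Fin d) × ℝ)) _
        ProbabilityMeasure.instTopologicalSpace ⟨ρ, this⟩) continuous_id)
  -- FTC identity
  have key : ∀ ρ ∈ P2set d, ∀ x,
      (∫ s in (0:ℝ)..1, dotProd (DU ρ (s • x)) x) = δU ρ x - δU ρ 0 := by
    intro ρ hρ x
    have hg : ∀ s : ℝ, HasDerivAt (fun u : ℝ => δU ρ (u • x))
        (dotProd (DU ρ (s • x)) x) s := by
      intro s
      have h1 := hD ρ hρ (s • x) x
      have h2 : HasDerivAt (fun u : ℝ => u - s) 1 s := (hasDerivAt_id s).sub_const s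
      have h3 := HasDerivAt.comp_of_eq (x := s) h1 h2 (sub_self s).symm
      have heq : ((fun t : ℝ => δU ρ (s • x + t • x)) ∘ (fun u : ℝ => u - s)) =
          fun u : ℝ => δU ρ (u • x) := by
        funext u
        simp only [Function.comp_apply, ← add_smul, add_sub_cancel]
      rw [heq] at h3
      simpa using h3
    have hcs : Continuous fun s : ℝ => dotProd (DU ρ (s • x)) x :=
      continuous_dotProd.comp (((hcρ ρ hρ).comp (continuous_id.smul continuous_const)).prodMk
        continuous_const)
    have := intervalIntegral.integral_eq_sub_of_hasDerivAt
      (f := fun u : ℝ => δU ρ (u • x)) (fun t _ => hg t)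
      (hcs.intervalIntegrable 0 1)
    simpa using this
  -- growth bound for the candidate
  have growthF : ∀ ρ ∈ P2set d, ∀ x,
      |∫ s in (0:ℝ)..1, dotProd (DU ρ (s • x)) x| ≤ (3 * |K|) * (1 + ‖x‖ ^ 2) := by
    intro ρ hρ x
    have hb : ∀ s ∈ Set.uIoc (0:ℝ) 1,
        ‖dotProd (DU ρ (s • x)) x‖ ≤ 2 * (|K| * (1 + ‖x‖)) * ‖x‖ := by
      intro s hs
      rw [Set.uIoc_of_le (by norm_num : (0:ℝ) ≤ 1)] at hs
      have hsx : ‖s • x‖ ≤ ‖x‖ := by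
        rw [norm_smul, Real.norm_eq_abs, abs_of_pos hs.1]
        nlinarith [norm_nonneg x, hs.2]
      have hDU : ‖DU ρ (s • x)‖ ≤ |K| * (1 + ‖x‖) := by
        calc ‖DU ρ (s • x)‖ ≤ K * (1 + ‖s • x‖) := hK ρ hρ _
        _ ≤ |K| * (1 + ‖x‖) := by
            have := le_abs_self K
            nlinarith [norm_nonneg (s • x), abs_nonneg K]
      calc ‖dotProd (DU ρ (s • x)) x‖ ≤ 2 * ‖DU ρ (s • x)‖ * ‖x‖ := abs_dotProd_le _ _
      _ ≤ 2 * (|K| * (1 + ‖x‖)) * ‖x‖ := by gcongr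
    have := intervalIntegral.norm_integral_le_of_norm_le_const hb
    simp only [Real.norm_eq_abs] at this
    calc |∫ s in (0:ℝ)..1, dotProd (DU ρ (s • x)) x|
        ≤ 2 * (|K| * (1 + ‖x‖)) * ‖x‖ * |1 - 0| := this
    _ ≤ (3 * |K|) * (1 + ‖x‖ ^ 2) := by
        have h := abs_nonneg K
        have h2 := norm_nonneg x
        have h3 : ‖x‖ * 2 ≤ 1 + ‖x‖ ^ 2 := by nlinarith [sq_nonneg (‖x‖ - 1)]
        rw [abs_of_nonneg (by norm_num : (0:ℝ) ≤ 1 - 0)]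
        nlinarith [sq_nonneg (‖x‖ - 1), mul_nonneg h (sq_nonneg ‖x‖)]
  constructor
  · constructor
    · exact ⟨3 * |K|, fun μ hμ x _ => growthF μ hμ x⟩
    · intro μ hμ ν hν
      rw [hδU.2 μ hμ ν hν]
      apply intervalIntegral.integral_congr
      intro l hl
      rw [Set.uIcc_of_le (by norm_num : (0:ℝ) ≤ 1)] at hl
      set ρl : Measure (EuclideanSpace ℝ (Fin d) × ℝ) :=
        ENNReal.ofReal l • μ + ENNReal.ofReal (1 - l) • ν with hρl_def
      have hρl : ρl ∈ P2set d := by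
        constructor
        · constructor
          have h1 : μ Set.univ = 1 := hμ.1.measure_univ
          have h2 : ν Set.univ = 1 := hν.1.measure_univ
          simp only [hρl_def, Measure.add_apply, Measure.smul_apply, h1, h2, smul_eq_mul,
            mul_one]
          rw [← ENNReal.ofReal_add hl.1 (by linarith [hl.2])]
          norm_num
        · exact ((hμ.2.smul_measure ENNReal.ofReal_ne_top).add_measure
            (hν.2.smul_measure ENNReal.ofReal_ne_top))
      -- continuity of the candidate for measure ρl
      have hcF : Continuous fun x : EuclideanSpace ℝ (Fin d) × ℝ =>
          ∫ s in (0:ℝ)..1, dotProd (DU ρl (s • x)) x := by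
        apply intervalIntegral.continuous_parametric_intervalIntegral_of_continuous'
        exact continuous_dotProd.comp ((((hcρ ρl hρl).comp
          (continuous_snd.smul continuous_fst)).prodMk continuous_fst))
      have hδUc : Continuous (δU ρl) := by
        have : (δU ρl) = fun x => (∫ s in (0:ℝ)..1, dotProd (DU ρl (s • x)) x) + δU ρl 0 := by
          funext x; rw [key ρl hρl x]; ring
        rw [this]
        exact hcF.add continuous_const
      obtain ⟨K₀, hK₀⟩ := hδU.1
      have hInt : ∀ (m : Measure (EuclideanSpace ℝ (Fin d) × ℝ)), m ∈ P2set d →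
          Integrable (δU ρl) m := by
        intro m hm
        have : IsProbabilityMeasure m := hm.1
        apply Integrable.mono' (g := fun x => |K₀| + |K₀| * ‖x‖ ^ 2)
        · exact (integrable_const _).add (hm.2.const_mul _)
        · exact hδUc.aestronglyMeasurable
        · filter_upwards with x
          rw [Real.norm_eq_abs]
          calc |δU ρl x| ≤ K₀ * (1 + ‖x‖ ^ 2) := hK₀ ρl hρl x (Set.mem_univ x)
          _ ≤ |K₀| + |K₀| * ‖x‖ ^ 2 := by
              have := le_abs_self K₀
              nlinarith [sq_nonneg ‖x‖]
      have eint : ∀ (m : Measure (EuclideanSpace ℝ (Fin d) × ℝ)), m ∈ P2set d →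
          ∫ x, (∫ s in (0:ℝ)..1, dotProd (DU ρl (s • x)) x) ∂m
            = (∫ x, δU ρl x ∂m) - δU ρl 0 := by
        intro m hm
        have : IsProbabilityMeasure m := hm.1
        have : ∫ x, (∫ s in (0:ℝ)..1, dotProd (DU ρl (s • x)) x) ∂m
            = ∫ x, (δU ρl x - δU ρl 0) ∂m := by
          apply integral_congr_ae
          filter_upwards with x
          exact key ρl hρl x
        rw [this, integral_sub (hInt m hm) (integrable_const _), integral_const]
        simp
      beta_reduce
      rw [← hρl_def, eint μ hμ, eint ν hν]
      ring
  · intro f hf1 hf2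
    refine ⟨fun ρ y => ∫ s in (0:ℝ)..1, (s * ⟪f ρ (s • y), y⟫ + (DU ρ (s • y, 0)).2),
      fun ρ hρ y z => ?_⟩
    rw [← intervalIntegral.integral_const_mul]
    apply intervalIntegral.integral_congr
    intro s _
    beta_reduce
    have hsm : s • ((y, z) : EuclideanSpace ℝ (Fin d) × ℝ) = (s • y, s * z) := rfl
    rw [hsm]
    simp only [dotProd]
    rw [hf1 ρ hρ (s • y) (s * z), hf2 ρ hρ (s • y) (s * z) 0, real_inner_smul_left]
    ring
end
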